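/- arXiv:2201.13333 — 2 statements merged into one kernel-verified Lean document; each statement's English description precedes it below -/
import Mathlib

section
/- Let n ≥ 2 and α ∈ ℝ. Define the n × n complex scattering matrix S by: S_{1,1} = e^{iα}/2, S_{m,m} = 1/2 for 2 ≤ m ≤ n, S_{m+1,m} = -1/2 for 1 ≤ m ≤ n-1, S_{1,n} = -1/2, and all other entries zero. Then perm S = (e^{iα} + (-1)^n) / 2^n. -/
open Complex

noncomputable def perm {n : ℕ} (S : Matrix (Fin n) (Fin n) ℂ) : ℂ :=
  ∑ σ : Equiv.Perm (Fin n), ∏ i, S i (σ i)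

/-!
Every nonzero entry of `S` lies on the diagonal or on the cyclic subdiagonal `j = i - 1`, so a
permutation contributes to `perm S` only if it moves each index by `0` or `-1`. Injectivity forces
such a permutation to be the identity or the cyclic shift `i ↦ i - 1`; these contribute
`e^{iα}/2 · (1/2)^(n-1)` and `(-1/2)^n`.
-/

namespace Fin

variable {n : ℕ}

lemma eq_sub_one_iff_val {i j : Fin (n + 1)} :
    j = i - 1 ↔ (i : ℕ) = j + 1 ∨ ((i : ℕ) = 0 ∧ (j : ℕ) = n) := by
  rw [Fin.ext_iff, coe_sub_one]
  split_ifs with h <;> simp only [Fin.ext_iff, val_zero] at h <;> omega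

open Fin.NatCast in
lemma perm_eq_one_or_eq_subRight_one {σ : Equiv.Perm (Fin (n + 1))}
    (hσ : ∀ i, σ i = i ∨ σ i = i - 1) : σ = 1 ∨ σ = Equiv.subRight 1 := by
  by_cases hfix : ∀ i, σ i = i
  · exact Or.inl (Equiv.ext hfix)
  obtain ⟨i₀, hi₀⟩ := not_forall.1 hfix
  -- A fixed point `i - 1` next to a moved point `i` would give `σ i = i - 1 = σ (i - 1)`.
  have moved_pred : ∀ i, σ i ≠ i → σ (i - 1) ≠ i - 1 := fun i hi hi' =>
    have hσi : σ i = i - 1 := (hσ i).resolve_left hi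
    hi (hσi.trans (σ.injective (hσi.trans hi'.symm)).symm)
  have moved : ∀ k : ℕ, σ (i₀ - k) ≠ i₀ - k := by
    intro k
    induction k with
    | zero => simpa using hi₀
    | succ k ih => simpa [sub_sub] using moved_pred _ ih
  refine Or.inr (Equiv.ext fun j => (hσ j).resolve_left ?_)
  -- `j = i₀ - (i₀ - j)` is reached from `i₀` after `(i₀ - j).val` steps.
  simpa using moved (i₀ - j).val

end Fin

lemma perm_eq_prod_diag_add_prod_sub_one {n : ℕ} (S : Matrix (Fin (n + 2)) (Fin (n + 2)) ℂ)
    (hS : ∀ i j, j ≠ i → j ≠ i - 1 → S i j = 0) :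
    perm S = ∏ i, S i i + ∏ i, S i (i - 1) := by
  have hne : (1 : Equiv.Perm (Fin (n + 2))) ≠ Equiv.subRight 1 := fun h => by
    simpa using DFunLike.congr_fun h 0
  rw [perm, ← Finset.sum_subset (Finset.subset_univ {1, Equiv.subRight 1}),
    Finset.sum_pair hne]
  · rfl
  intro σ _ hσ
  by_contra hprod
  have hσ' : ∀ i, σ i = i ∨ σ i = i - 1 := fun i => by
    by_contra! h
    exact Finset.prod_ne_zero_iff.1 hprod i (Finset.mem_univ i) (hS i (σ i) h.1 h.2)
  rcases Fin.perm_eq_one_or_eq_subRight_one hσ' with rfl | rfl <;> simp at hσ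

theorem stmt_2 (n : ℕ) (hn : 2 ≤ n) (α : ℝ)
    (S : Matrix (Fin n) (Fin n) ℂ)
    (h11 : ∀ i j : Fin n, (i : ℕ) = 0 → (j : ℕ) = 0 → S i j = Complex.exp (α * I) / 2)
    (hdiag : ∀ i j : Fin n, (i : ℕ) = (j : ℕ) → (i : ℕ) ≠ 0 → S i j = 1/2)
    (hsub : ∀ i j : Fin n, (i : ℕ) = (j : ℕ) + 1 → S i j = -(1/2))
    (hcorner : ∀ i j : Fin n, (i : ℕ) = 0 → (j : ℕ) = n - 1 → S i j = -(1/2))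
    (hzero : ∀ i j : Fin n, (i : ℕ) ≠ (j : ℕ) → (i : ℕ) ≠ (j : ℕ) + 1 →
      ¬((i : ℕ) = 0 ∧ (j : ℕ) = n - 1) → S i j = 0) :
    perm S = (Complex.exp (α * I) + (-1 : ℂ) ^ n) / 2 ^ n := by
  obtain ⟨m, rfl⟩ : ∃ m, n = m + 2 := ⟨n - 2, by omega⟩
  have hsupport : ∀ i j, j ≠ i → j ≠ i - 1 → S i j = 0 := fun i j hij hj =>
    hzero i j (Fin.val_ne_of_ne hij.symm) (fun h => hj (Fin.eq_sub_one_iff_val.2 (.inl h)))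
      (fun h => hj (Fin.eq_sub_one_iff_val.2 (.inr ⟨h.1, by omega⟩)))
  have hdiag_prod : ∏ i, S i i = Complex.exp (α * I) / 2 * (1 / 2) ^ (m + 1) := by
    rw [Fin.prod_univ_succ, h11 0 0 rfl rfl,
      Finset.prod_congr rfl fun i _ => hdiag i.succ i.succ rfl (by simp)]
    simp
  have hcycle_prod : ∏ i, S i (i - 1) = (-(1 / 2)) ^ (m + 2) := by
    rw [Finset.prod_congr rfl fun i _ => (?_ : S i (i - 1) = -(1 / 2)), Finset.prod_const,
      Finset.card_univ, Fintype.card_fin]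
    rcases Fin.eq_sub_one_iff_val.1 (rfl : i - 1 = i - 1) with h | ⟨h0, hlast⟩
    · exact hsub _ _ h
    · exact hcorner _ _ h0 (by omega)
  rw [perm_eq_prod_diag_add_prod_sub_one S hsupport, hdiag_prod, hcycle_prod]
  simp only [neg_div', div_pow]
  ring
end

section
/- Let n ≥ 2 and α ∈ ℝ, and let S be the n × n matrix with S_{1,1} = e^{iα}/2, S_{m,m} = 1/2 for m ≥ 2, S_{m+1,m} = -1/2 for 1 ≤ m ≤ n-1, S_{1,n} = -1/2, zero elsewhere. Then |perm S|² = (1 + (-1)^n cos α) / 2^{2n-1}. -/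
/-!
Every off-diagonal nonzero entry of `S` lies on the cyclic subdiagonal `S i (c i)`, where
`c = (finRotate n)⁻¹` is an `n`-cycle. A permutation that sends each `i` to `i` or to `c i` is
either the identity or `c` itself, so the permanent has exactly two nonzero terms:
`perm S = e^{iα}/2^n + (-1/2)^n`, and `|e^{iα} + (-1)^n|² = 2 (1 + (-1)^n cos α)`.
-/

open Complex

namespace Equiv.Perm

variable {α : Type*} [Fintype α] [DecidableEq α]

theorem eq_one_or_eq_of_forall_apply_eq_or_eq {σ c : Perm α} (hc : c.IsCycle)
    (hsupp : c.support = Finset.univ) (h : ∀ x, σ x = x ∨ σ x = c x) : σ = 1 ∨ σ = c := by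
  have hmoved : ∀ x, c x ≠ x := fun x => mem_support.mp (hsupp ▸ Finset.mem_univ x)
  by_cases hfix : ∀ x, σ x = x
  · exact Or.inl (Equiv.ext hfix)
  obtain ⟨x, hx⟩ := not_forall.mp hfix
  -- once σ agrees with c at y it must agree at c y, since σ (c y) = c y = σ y would force c y = y
  have hstep : ∀ y, σ y = c y → σ (c y) = c (c y) := fun y hy =>
    (h (c y)).resolve_left fun hcy => hmoved y (σ.injective (hcy.trans hy.symm))
  have hpow : ∀ k : ℕ, σ ((c ^ k) x) = c ((c ^ k) x) := by
    intro k
    induction k with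
    | zero => exact (h x).resolve_left hx
    | succ k ih => rw [pow_succ', mul_apply]; exact hstep _ ih
  refine Or.inr (Equiv.ext fun y => ?_)
  obtain ⟨k, rfl⟩ := (hc.sameCycle (hmoved x) (hmoved y)).exists_nat_pow_eq
  exact hpow k

end Equiv.Perm

theorem perm_eq_prod_add_prod_of_isCycle {n : ℕ} {M : Matrix (Fin n) (Fin n) ℂ}
    {c : Equiv.Perm (Fin n)} (hc : c.IsCycle) (hsupp : c.support = Finset.univ)
    (hM : ∀ i j, j ≠ i → j ≠ c i → M i j = 0) :
    perm M = ∏ i, M i i + ∏ i, M i (c i) := by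
  have hvanish : ∀ σ ∈ Finset.univ, σ ∉ ({1, c} : Finset _) → ∏ i, M i (σ i) = 0 := by
    intro σ _ hσ
    have hσ' : ¬(σ = 1 ∨ σ = c) := by simpa using hσ
    have : ∃ i, σ i ≠ i ∧ σ i ≠ c i := by
      by_contra! h
      exact hσ' (Equiv.Perm.eq_one_or_eq_of_forall_apply_eq_or_eq hc hsupp
        fun i => or_iff_not_imp_left.mpr (h i))
    obtain ⟨i, hi, hci⟩ := this
    exact Finset.prod_eq_zero (Finset.mem_univ i) (hM i (σ i) hi hci)
  rw [perm, ← Finset.sum_subset (Finset.subset_univ _) hvanish,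
    Finset.sum_pair hc.ne_one.symm]
  rfl

theorem norm_exp_mul_I_add_ofReal_sq (α x : ℝ) :
    ‖exp (α * I) + x‖ ^ 2 = 1 + 2 * x * Real.cos α + x ^ 2 := by
  have h : exp (α * I) + x = ((Real.cos α + x : ℝ) : ℂ) + (Real.sin α : ℝ) * I := by
    rw [exp_mul_I]; push_cast; ring
  rw [Complex.sq_norm, h, normSq_add_mul_I]
  linear_combination Real.sin_sq_add_cos_sq α

theorem norm_exp_mul_I_add_neg_one_pow_div_sq (α : ℝ) {n : ℕ} (hn : n ≠ 0) :
    ‖(exp (α * I) + (-1) ^ n) / 2 ^ n‖ ^ 2 = (1 + (-1 : ℝ) ^ n * Real.cos α) / 2 ^ (2 * n - 1) := by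
  have hnorm := norm_exp_mul_I_add_ofReal_sq α ((-1) ^ n)
  push_cast at hnorm
  have hsign : ((-1 : ℝ) ^ n) ^ 2 = 1 := by rw [← pow_mul, mul_comm, pow_mul]; norm_num
  rw [norm_div, div_pow, hnorm, hsign, norm_pow, Complex.norm_two, ← pow_mul,
    show n * 2 = 2 * n - 1 + 1 by omega, pow_succ]
  field_simp
  ring

theorem finRotate_apply_eq_iff {n : ℕ} (i j : Fin (n + 1)) :
    finRotate (n + 1) j = i ↔ (i : ℕ) = j + 1 ∨ ((i : ℕ) = 0 ∧ (j : ℕ) = n) := by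
  rw [Fin.ext_iff, coe_finRotate]
  split_ifs with h <;> simp only [Fin.ext_iff, Fin.val_last] at h <;> omega

theorem stmt_3 (n : ℕ) (hn : 2 ≤ n) (α : ℝ)
    (S : Matrix (Fin n) (Fin n) ℂ)
    (h11 : ∀ i j : Fin n, (i : ℕ) = 0 → (j : ℕ) = 0 → S i j = Complex.exp (α * I) / 2)
    (hdiag : ∀ i j : Fin n, (i : ℕ) = (j : ℕ) → (i : ℕ) ≠ 0 → S i j = 1/2)
    (hsub : ∀ i j : Fin n, (i : ℕ) = (j : ℕ) + 1 → S i j = -(1/2))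
    (hcorner : ∀ i j : Fin n, (i : ℕ) = 0 → (j : ℕ) = n - 1 → S i j = -(1/2))
    (hzero : ∀ i j : Fin n, (i : ℕ) ≠ (j : ℕ) → (i : ℕ) ≠ (j : ℕ) + 1 →
      ¬((i : ℕ) = 0 ∧ (j : ℕ) = n - 1) → S i j = 0) :
    ‖perm S‖ ^ 2 = (1 + (-1 : ℝ) ^ n * Real.cos α) / 2 ^ (2 * n - 1) := by
  obtain ⟨k, rfl⟩ : ∃ k, n = k + 2 := ⟨n - 2, by omega⟩
  have hM : ∀ i j, j ≠ i → j ≠ (finRotate (k + 2))⁻¹ i → S i j = 0 := by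
    intro i j hji hjc
    rw [Ne, Equiv.Perm.inv_def, Equiv.eq_symm_apply, finRotate_apply_eq_iff] at hjc
    exact hzero i j (Fin.val_ne_of_ne hji.symm) (by tauto) (by omega)
  have hdiagonal : ∏ i, S i i = exp (α * I) / 2 * (1 / 2) ^ (k + 1) := by
    rw [Fin.prod_univ_succ, h11 0 0 rfl rfl,
      Finset.prod_congr rfl fun i _ => hdiag i.succ i.succ rfl (Nat.succ_ne_zero _),
      Finset.prod_const, Finset.card_univ, Fintype.card_fin]
  have hcycle : ∏ i, S i ((finRotate (k + 2))⁻¹ i) = (-(1 / 2)) ^ (k + 2) := by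
    rw [← Equiv.prod_comp (finRotate (k + 2)), Finset.prod_congr rfl fun j _ => ?_,
      Finset.prod_const, Finset.card_univ, Fintype.card_fin]
    rw [Equiv.Perm.inv_def, Equiv.symm_apply_apply]
    rcases (finRotate_apply_eq_iff _ j).mp rfl with h | h
    · exact hsub _ j h
    · exact hcorner _ j h.1 (by omega)
  rw [perm_eq_prod_add_prod_of_isCycle isCycle_finRotate.inv
    ((Equiv.Perm.support_inv _).trans support_finRotate) hM, hdiagonal, hcycle,
    ← norm_exp_mul_I_add_neg_one_pow_div_sq α (by omega)]
  congr 2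
  rw [← neg_div, div_pow, div_pow, one_pow]
  field_simp
  ring
end
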